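/- arXiv:2503.07122 — 3 statements merged into one kernel-verified Lean document; each statement's English description precedes it below -/
import Mathlib

section
/- Let d ≥ 1 and 1 < p < ∞ with conjugate exponent p′. Let ρ₁ be a probability measure on ℝ^d, T : ℝ^d → ℝ^d a measurable map with ∫ |T(x) − x|^p dρ₁(x) < ∞, and ρ₂ := T_# ρ₁. For θ ∈ [1, 2], let ρ_θ := ((θ − 1)T + (2 − θ)Id)_# ρ₁ denote the interpolant measures. Then for every smooth compactly supported function φ on ℝ^d, ∫ φ dρ₁ − ∫ φ dρ₂ ≤ sup_{θ ∈ [1,2]} (∫_{ℝ^d} |∇φ|^{p′} dρ_θ)^{1/p′} · (∫_{ℝ^d} |T(x) − x|^p dρ₁(x))^{1/p}. -/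
open MeasureTheory Set

noncomputable section

/-- Displacement-interpolation estimate: for a probability measure `ρ₁`, a transport
map `T` with `ρ₂ = T_#ρ₁`, and interpolants `ρ_θ = ((θ−1)T + (2−θ)Id)_#ρ₁`,
every smooth compactly supported `φ` satisfies
`∫φ dρ₁ − ∫φ dρ₂ ≤ sup_θ (∫|∇φ|^{p′} dρ_θ)^{1/p′} (∫|T(x)−x|^p dρ₁)^{1/p}`. -/
theorem stmt4 (d : ℕ) (hd : 1 ≤ d) (p p' : ℝ) (hp : 1 < p) (hpp' : 1 / p + 1 / p' = 1)
    (ρ₁ : Measure (EuclideanSpace ℝ (Fin d))) (hρ₁ : IsProbabilityMeasure ρ₁)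
    (T : EuclideanSpace ℝ (Fin d) → EuclideanSpace ℝ (Fin d)) (hT : Measurable T)
    (hTp : Integrable (fun x => ‖T x - x‖ ^ p) ρ₁)
    (φ : EuclideanSpace ℝ (Fin d) → ℝ) (hφ : ContDiff ℝ (⊤ : ℕ∞) φ) (hφc : HasCompactSupport φ) :
    (∫ x, φ x ∂ρ₁) - (∫ x, φ x ∂(ρ₁.map T)) ≤
      (⨆ θ : Icc (1:ℝ) 2,
        (∫ x, ‖gradient φ x‖ ^ p'
            ∂(ρ₁.map fun x => (θ.1 - 1) • T x + (2 - θ.1) • x)) ^ (1 / p')) *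
        (∫ x, ‖T x - x‖ ^ p ∂ρ₁) ^ (1 / p) := by
  classical
  set v : EuclideanSpace ℝ (Fin d) → EuclideanSpace ℝ (Fin d) := fun x => T x - x with hv
  -- exponents
  have hpq : p.HolderConjugate p' := Real.holderConjugate_iff.2 ⟨hp, by rwa [one_div, one_div] at hpp'⟩
  have hq : 1 < p' := (Real.holderConjugate_iff.1 hpq.symm).1
  have hp0 : (0:ℝ) < p := lt_trans one_pos hp
  have hq0 : (0:ℝ) < p' := lt_trans one_pos hq
  -- gradient facts
  have hgradnorm : ∀ y, ‖gradient φ y‖ = ‖fderiv ℝ φ y‖ := fun y =>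
    LinearIsometryEquiv.norm_map _ _
  have hfc : Continuous (fderiv ℝ φ) := hφ.continuous_fderiv (by simp)
  have hgc : Continuous (gradient φ) := by
    unfold gradient
    exact (InnerProductSpace.toDual ℝ _).symm.continuous.comp hfc
  obtain ⟨M, hM⟩ := (hφc.fderiv (𝕜 := ℝ)).exists_bound_of_continuous hfc
  have hM0 : 0 ≤ M := le_trans (norm_nonneg _) (hM 0)
  have hgM : ∀ y, ‖gradient φ y‖ ≤ M := fun y => (hgradnorm y).le.trans (hM y)
  -- measurability of v
  have hvm : Measurable v := hT.sub measurable_id'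
  -- MemLp of v
  have hTm : AEStronglyMeasurable v ρ₁ := hvm.aestronglyMeasurable
  have hne : ENNReal.ofReal p ≠ 0 := by
    simp only [ne_eq, ENNReal.ofReal_eq_zero, not_le]; exact hp0
  have hmem : MemLp v (ENNReal.ofReal p) ρ₁ := by
    have h1 : MemLp (fun x => ‖v x‖ ^ (ENNReal.ofReal p).toReal)
        (ENNReal.ofReal p / ENNReal.ofReal p) ρ₁ := by
      rw [ENNReal.div_self hne ENNReal.ofReal_ne_top, ENNReal.toReal_ofReal hp0.le]
      exact memLp_one_iff_integrable.2 hTp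
    exact (memLp_norm_rpow_iff hTm hne ENNReal.ofReal_ne_top).1 h1
  have hvint : Integrable (fun x => ‖v x‖) ρ₁ :=
    (hmem.integrable (ENNReal.one_le_ofReal.2 hp.le)).norm
  -- constants
  set B : ℝ := ∫ x, ‖T x - x‖ ^ p ∂ρ₁ with hB
  have hB0 : 0 ≤ B := integral_nonneg fun x => Real.rpow_nonneg (norm_nonneg _) _
  set C : ℝ := ⨆ θ : Icc (1:ℝ) 2,
      (∫ x, ‖gradient φ x‖ ^ p'
          ∂(ρ₁.map fun x => (θ.1 - 1) • T x + (2 - θ.1) • x)) ^ (1 / p') with hC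
  -- boundedness of the family
  have hbdd : BddAbove (range fun θ : Icc (1:ℝ) 2 =>
      (∫ x, ‖gradient φ x‖ ^ p'
          ∂(ρ₁.map fun x => (θ.1 - 1) • T x + (2 - θ.1) • x)) ^ (1 / p')) := by
    refine ⟨(M ^ p') ^ (1 / p'), ?_⟩
    rintro _ ⟨θ, rfl⟩
    set m := ρ₁.map fun x => (θ.1 - 1) • T x + (2 - θ.1) • x with hm
    have hfθ : Measurable fun x : EuclideanSpace ℝ (Fin d) =>
        (θ.1 - 1) • T x + (2 - θ.1) • x :=
      ((hT.const_smul (θ.1 - 1))).add (measurable_id'.const_smul (2 - θ.1))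
    haveI : IsProbabilityMeasure m := Measure.isProbabilityMeasure_map hfθ.aemeasurable
    have hint : Integrable (fun y => ‖gradient φ y‖ ^ p') m := by
      refine (integrable_const (M ^ p')).mono'
        ((hgc.norm.rpow_const fun y => Or.inr hq0.le).aestronglyMeasurable) ?_
      refine Filter.Eventually.of_forall fun y => ?_
      rw [Real.norm_of_nonneg (Real.rpow_nonneg (norm_nonneg _) _)]
      exact Real.rpow_le_rpow (norm_nonneg _) (hgM y) hq0.le
    have h1 : ∫ y, ‖gradient φ y‖ ^ p' ∂m ≤ M ^ p' := by
      calc ∫ y, ‖gradient φ y‖ ^ p' ∂m ≤ ∫ _, M ^ p' ∂m :=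
            integral_mono hint (integrable_const _)
              fun y => Real.rpow_le_rpow (norm_nonneg _) (hgM y) hq0.le
        _ = M ^ p' := by simp
    exact Real.rpow_le_rpow (integral_nonneg fun y => Real.rpow_nonneg (norm_nonneg _) _)
      h1 (by positivity)
  have hC0 : 0 ≤ C := by
    refine le_ciSup_of_le hbdd ⟨1, by norm_num⟩ ?_
    exact Real.rpow_nonneg (integral_nonneg fun y => Real.rpow_nonneg (norm_nonneg _) _) _
  -- the measure on times
  set ν : Measure ℝ := volume.restrict (Ioc (0:ℝ) 1) with hν
  haveI : IsProbabilityMeasure ν := ⟨by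
    rw [hν, Measure.restrict_apply_univ, Real.volume_Ioc]; norm_num⟩
  -- the integrand
  set F : EuclideanSpace ℝ (Fin d) → ℝ → ℝ := fun x t => -(fderiv ℝ φ (x + t • v x) (v x)) with hF
  -- pointwise FTC
  have key : ∀ x, φ x - φ (T x) = ∫ t, F x t ∂ν := by
    intro x
    have hderiv : ∀ t ∈ uIcc (0:ℝ) 1,
        HasDerivAt (fun s => φ (x + s • v x)) (fderiv ℝ φ (x + t • v x) (v x)) t := by
      intro t _
      have h1 : HasDerivAt (fun s : ℝ => x + s • v x) (v x) t := by
        simpa using ((hasDerivAt_id t).smul_const (v x)).const_add x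
      simpa [Function.comp_def] using
        ((hφ.differentiable (by simp) _).hasFDerivAt.comp_hasDerivAt t h1)
    have hcont : IntervalIntegrable (fun t => fderiv ℝ φ (x + t • v x) (v x))
        volume 0 1 := by
      exact ((hfc.comp (continuous_const.add (continuous_id.smul continuous_const))).clm_apply
        continuous_const).intervalIntegrable 0 1
    have := intervalIntegral.integral_eq_sub_of_hasDerivAt hderiv hcont
    have h01 : x + (1:ℝ) • v x = T x := by rw [one_smul]; simp [hv]
    have h00 : x + (0:ℝ) • v x = x := by rw [zero_smul, add_zero]
    rw [h01, h00] at this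
    have : ∫ t in (0:ℝ)..1, F x t = φ x - φ (T x) := by
      rw [show (fun t => F x t) = fun t => -(fderiv ℝ φ (x + t • v x) (v x)) from rfl]
      rw [intervalIntegral.integral_neg, this]; ring
    rw [← this, intervalIntegral.integral_of_le zero_le_one]
  -- measurability/integrability of the double integrand
  have hmeas2 : Measurable fun z : EuclideanSpace ℝ (Fin d) × ℝ => F z.1 z.2 := by
    have m1 : Measurable fun z : EuclideanSpace ℝ (Fin d) × ℝ => z.1 + z.2 • v z.1 :=
      measurable_fst.add (measurable_snd.smul (hvm.comp measurable_fst))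
    have m2 : Measurable fun z : EuclideanSpace ℝ (Fin d) × ℝ => v z.1 :=
      hvm.comp measurable_fst
    exact (isBoundedBilinearMap_apply.continuous.measurable.comp
      ((hfc.measurable.comp m1).prodMk m2)).neg
  have hFbound : ∀ x t, ‖F x t‖ ≤ M * ‖v x‖ := by
    intro x t
    rw [hF, norm_neg]
    calc ‖fderiv ℝ φ (x + t • v x) (v x)‖ ≤ ‖fderiv ℝ φ (x + t • v x)‖ * ‖v x‖ :=
          ContinuousLinearMap.le_opNorm _ _
      _ ≤ M * ‖v x‖ := mul_le_mul_of_nonneg_right (hM _) (norm_nonneg _)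
  have G_int : Integrable (fun z : EuclideanSpace ℝ (Fin d) × ℝ => M * ‖v z.1‖)
      (ρ₁.prod ν) := by
    have h0 : Integrable (fun x => M * ‖v x‖) ρ₁ := hvint.const_mul M
    have hmap : (ρ₁.prod ν).map Prod.fst = ρ₁ := by
      rw [Measure.map_fst_prod]; simp
    exact Integrable.comp_measurable (f := Prod.fst)
      (g := fun x => M * ‖v x‖) (by rwa [hmap]) measurable_fst
  have h_int : Integrable (Function.uncurry F) (ρ₁.prod ν) := by
    refine G_int.mono' hmeas2.aestronglyMeasurable ?_
    exact Filter.Eventually.of_forall fun z => hFbound z.1 z.2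
  -- the per-time estimate
  have per_t : ∀ t ∈ Ioc (0:ℝ) 1, ∫ x, F x t ∂ρ₁ ≤ C * B ^ (1 / p) := by
    intro t ht
    have hLm : Measurable fun x : EuclideanSpace ℝ (Fin d) => x + t • v x :=
      measurable_id'.add (hvm.const_smul t)
    have hFt_int : Integrable (fun x => F x t) ρ₁ := by
      refine (hvint.const_mul M).mono'
        ((isBoundedBilinearMap_apply.continuous.measurable.comp
          (((hfc.measurable.comp hLm)).prodMk hvm)).neg).aestronglyMeasurable ?_
      exact Filter.Eventually.of_forall fun x => hFbound x t
    have hprod_int : Integrable (fun x => ‖gradient φ (x + t • v x)‖ * ‖v x‖) ρ₁ := by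
      refine (hvint.const_mul M).mono'
        ((((hgc.measurable.comp hLm).norm).mul hvm.norm).aestronglyMeasurable) ?_
      refine Filter.Eventually.of_forall fun x => ?_
      rw [Real.norm_of_nonneg (mul_nonneg (norm_nonneg _) (norm_nonneg _))]
      exact mul_le_mul_of_nonneg_right (hgM _) (norm_nonneg _)
    have step1 : ∫ x, F x t ∂ρ₁ ≤ ∫ x, ‖gradient φ (x + t • v x)‖ * ‖v x‖ ∂ρ₁ := by
      refine integral_mono hFt_int hprod_int fun x => ?_
      calc F x t ≤ ‖F x t‖ := le_abs_self _
        _ ≤ ‖fderiv ℝ φ (x + t • v x)‖ * ‖v x‖ := by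
            rw [hF, norm_neg]; exact ContinuousLinearMap.le_opNorm _ _
        _ = ‖gradient φ (x + t • v x)‖ * ‖v x‖ := by rw [hgradnorm]
    -- Hölder
    have hf_mem : MemLp (fun x => ‖gradient φ (x + t • v x)‖) (ENNReal.ofReal p') ρ₁ := by
      refine MemLp.of_bound ((hgc.measurable.comp hLm).norm).aestronglyMeasurable M ?_
      exact Filter.Eventually.of_forall fun x => by
        rw [Real.norm_of_nonneg (norm_nonneg _)]; exact hgM _
    have hg_mem : MemLp (fun x => ‖v x‖) (ENNReal.ofReal p) ρ₁ := hmem.norm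
    have holder := integral_mul_le_Lp_mul_Lq_of_nonneg hpq.symm
      (Filter.Eventually.of_forall fun x => norm_nonneg (gradient φ (x + t • v x)))
      (Filter.Eventually.of_forall fun x => norm_nonneg (v x)) hf_mem hg_mem
    -- identify with the pushforward measure
    have hmem12 : (1 : ℝ) + t ∈ Icc (1:ℝ) 2 := ⟨by linarith [ht.1], by linarith [ht.2]⟩
    set θt : Icc (1:ℝ) 2 := ⟨1 + t, hmem12⟩ with hθt
    have hfθ : Measurable fun x : EuclideanSpace ℝ (Fin d) =>
        (θt.1 - 1) • T x + (2 - θt.1) • x :=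
      ((hT.const_smul (θt.1 - 1))).add (measurable_id'.const_smul (2 - θt.1))
    have hpush : ∫ x, ‖gradient φ x‖ ^ p'
        ∂(ρ₁.map fun x => (θt.1 - 1) • T x + (2 - θt.1) • x)
        = ∫ x, ‖gradient φ (x + t • v x)‖ ^ p' ∂ρ₁ := by
      rw [integral_map hfθ.aemeasurable
        ((hgc.norm.rpow_const fun y => Or.inr hq0.le).aestronglyMeasurable)]
      refine integral_congr_ae (Filter.Eventually.of_forall fun x => ?_)
      have : (θt.1 - 1) • T x + (2 - θt.1) • x = x + t • v x := by
        rw [hθt, hv]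
        show ((1 + t) - 1) • T x + (2 - (1 + t)) • x = x + t • (T x - x)
        rw [smul_sub]
        have h1 : ((1:ℝ) + t) - 1 = t := by ring
        have h2 : (2:ℝ) - (1 + t) = 1 - t := by ring
        rw [h1, h2, sub_smul, one_smul]
        abel
      simp only [this]
    have hle : (∫ x, ‖gradient φ (x + t • v x)‖ ^ p' ∂ρ₁) ^ (1 / p') ≤ C := by
      rw [← hpush]
      exact le_ciSup hbdd θt
    calc ∫ x, F x t ∂ρ₁ ≤ ∫ x, ‖gradient φ (x + t • v x)‖ * ‖v x‖ ∂ρ₁ := step1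
      _ ≤ (∫ x, ‖gradient φ (x + t • v x)‖ ^ p' ∂ρ₁) ^ (1 / p') *
            (∫ x, ‖v x‖ ^ p ∂ρ₁) ^ (1 / p) := holder
      _ = (∫ x, ‖gradient φ (x + t • v x)‖ ^ p' ∂ρ₁) ^ (1 / p') * B ^ (1 / p) := rfl
      _ ≤ C * B ^ (1 / p) :=
          mul_le_mul_of_nonneg_right hle (Real.rpow_nonneg hB0 _)
  -- integrability of φ and φ ∘ T
  obtain ⟨Mφ, hMφ⟩ := hφc.exists_bound_of_continuous hφ.continuous
  have hφ1 : Integrable φ ρ₁ := hφ.continuous.integrable_of_hasCompactSupport hφc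
  have hφ2 : Integrable (fun x => φ (T x)) ρ₁ :=
    (integrable_const Mφ).mono' ((hφ.continuous.measurable.comp hT).aestronglyMeasurable)
      (Filter.Eventually.of_forall fun x => hMφ _)
  -- main computation
  have hmapφ : ∫ x, φ x ∂(ρ₁.map T) = ∫ x, φ (T x) ∂ρ₁ :=
    integral_map hT.aemeasurable hφ.continuous.aestronglyMeasurable
  have swap_int : Integrable (fun t => ∫ x, F x t ∂ρ₁) ν :=
    (h_int.swap).integral_prod_left
  calc (∫ x, φ x ∂ρ₁) - ∫ x, φ x ∂(ρ₁.map T)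
      = ∫ x, (φ x - φ (T x)) ∂ρ₁ := by rw [hmapφ, integral_sub hφ1 hφ2]
    _ = ∫ x, ∫ t, F x t ∂ν ∂ρ₁ := integral_congr_ae (Filter.Eventually.of_forall key)
    _ = ∫ t, ∫ x, F x t ∂ρ₁ ∂ν := integral_integral_swap h_int
    _ ≤ ∫ _, C * B ^ (1 / p) ∂ν := by
        refine integral_mono_ae swap_int (integrable_const _) ?_
        filter_upwards [ae_restrict_mem measurableSet_Ioc] with t ht
        exact per_t t ht
    _ = C * B ^ (1 / p) := by simp
end
end

section
/- Let d ≥ 2 and let Θ be a growth function with Θ(1) = 1. There is a constant C > 0 depending only on d and Θ such that for every probability density ρ ∈ Y^Θ(ℝ^d) and every x ∈ ℝ^d, ∫_{ℝ^d} |x − q|^{1−d} ρ(q) dq ≤ C (1 + ‖ρ‖_{Y^Θ}). In particular, the Newtonian force field E_ρ satisfies ‖E_ρ‖_{L^∞(ℝ^d)} ≤ C (1 + ‖ρ‖_{Y^Θ}). -/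
/-!
Split the potential at distance one from `x`. Far away the kernel `‖x - q‖ ^ (1 - d)` is at
most `1`, so that part is bounded by the mass of `ρ`. Near `x`, Hölder's inequality bounds it by
`‖ρ‖_{L^p} ≤ Θ(p) ‖ρ‖_{Y^Θ}` times the `L^{p'}` norm of the kernel on the unit ball, which is
finite as soon as `(d - 1) p' < d`; `p = 2d + 1` will do.
-/

open MeasureTheory Set
open scoped ENNReal

noncomputable section

/-- The Newtonian force field (with normalizing constant `1`) of a density `ρ`. -/
def force (d : ℕ) (ρ : EuclideanSpace ℝ (Fin d) → ℝ) (x : EuclideanSpace ℝ (Fin d)) :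
    EuclideanSpace ℝ (Fin d) :=
  ∫ q, (ρ q / ‖x - q‖ ^ d) • (x - q)

/-- The Yudovich norm `sup_{1 ≤ r < ∞} ‖h‖_{L^r}/Θ(r)`. -/
def Ynorm (d : ℕ) (Θ : ℝ → ℝ) (h : EuclideanSpace ℝ (Fin d) → ℝ) : ℝ :=
  sSup {x : ℝ | ∃ r : ℝ, 1 ≤ r ∧
    x = (eLpNorm h (ENNReal.ofReal r) volume).toReal / Θ r}

/-- Membership in the Yudovich space `Y^Θ(ℝ^d)`. -/
def MemY (d : ℕ) (Θ : ℝ → ℝ) (h : EuclideanSpace ℝ (Fin d) → ℝ) : Prop :=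
  (∀ r : ℝ, 1 ≤ r → MemLp h (ENNReal.ofReal r) volume) ∧
    BddAbove {x : ℝ | ∃ r : ℝ, 1 ≤ r ∧
      x = (eLpNorm h (ENNReal.ofReal r) volume).toReal / Θ r}

open Metric Module

theorem setLIntegral_compl_ball_rpow_norm_sub_mul_le {E : Type*} [NormedAddCommGroup E]
    [MeasurableSpace E] [OpensMeasurableSpace E] {μ : Measure E} {s : ℝ} (hs : s ≤ 0)
    (f : E → ℝ≥0∞) (x : E) :
    ∫⁻ a in (ball x 1)ᶜ, ENNReal.ofReal (‖x - a‖ ^ s) * f a ∂μ ≤ ∫⁻ a, f a ∂μ := by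
  calc ∫⁻ a in (ball x 1)ᶜ, ENNReal.ofReal (‖x - a‖ ^ s) * f a ∂μ
      ≤ ∫⁻ a in (ball x 1)ᶜ, f a ∂μ := by
        refine setLIntegral_mono' measurableSet_ball.compl fun a ha => ?_
        have hfar : 1 ≤ ‖x - a‖ := by simpa [dist_eq_norm, norm_sub_rev] using ha
        calc ENNReal.ofReal (‖x - a‖ ^ s) * f a ≤ 1 * f a := by
              gcongr
              exact ENNReal.ofReal_le_one.mpr (Real.rpow_le_one_of_one_le_of_nonpos hfar hs)
          _ = f a := one_mul _
    _ ≤ ∫⁻ a, f a ∂μ := setLIntegral_le_lintegral _ _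

section Potential

variable {E : Type*} [NormedAddCommGroup E] [NormedSpace ℝ E] [FiniteDimensional ℝ E]
  [MeasurableSpace E] [BorelSpace E] {μ : Measure E} [μ.IsAddHaarMeasure]

theorem setLIntegral_ball_comp_sub_left (g : E → ℝ≥0∞) (x : E) (r : ℝ) :
    ∫⁻ a in ball x r, g (x - a) ∂μ = ∫⁻ y in ball 0 r, g y ∂μ := by
  have hpre : (x - ·) ⁻¹' ball (0 : E) r = ball x r := by
    ext a
    simp [dist_eq_norm, norm_sub_rev]
  calc ∫⁻ a in ball x r, g (x - a) ∂μ = ∫⁻ a, (ball 0 r).indicator g (x - a) ∂μ := by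
        rw [← lintegral_indicator measurableSet_ball, ← hpre]
        exact lintegral_congr fun a => indicator_comp_right (x - ·)
    _ = ∫⁻ y in ball 0 r, g y ∂μ := by
        rw [lintegral_sub_left_eq_self, lintegral_indicator measurableSet_ball]

theorem setLIntegral_ball_mul_le_Lp_mul_Lq {p q : ℝ} (hpq : p.HolderConjugate q)
    {k f : E → ℝ≥0∞} (hk : Measurable k) (hf : AEMeasurable f μ) (x : E) (r : ℝ) :
    ∫⁻ a in ball x r, k (x - a) * f a ∂μ ≤
      (∫⁻ y in ball 0 r, k y ^ q ∂μ) ^ (1 / q) * (∫⁻ a, f a ^ p ∂μ) ^ (1 / p) := by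
  calc ∫⁻ a in ball x r, k (x - a) * f a ∂μ
      ≤ (∫⁻ a in ball x r, k (x - a) ^ q ∂μ) ^ (1 / q) *
          (∫⁻ a in ball x r, f a ^ p ∂μ) ^ (1 / p) :=
        ENNReal.lintegral_mul_le_Lp_mul_Lq _ hpq.symm
          (hk.comp (measurable_const.sub measurable_id)).aemeasurable hf.restrict
    _ ≤ _ := by
        rw [setLIntegral_ball_comp_sub_left (fun y => k y ^ q)]
        exact mul_le_mul_right (ENNReal.rpow_le_rpow (setLIntegral_le_lintegral _ _)
          (one_div_nonneg.mpr hpq.nonneg)) _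

theorem lintegral_rpow_norm_sub_mul_le {s p q : ℝ} (hs : s ≤ 0) (hpq : p.HolderConjugate q)
    {f : E → ℝ≥0∞} (hf : AEMeasurable f μ) (x : E) :
    ∫⁻ a, ENNReal.ofReal (‖x - a‖ ^ s) * f a ∂μ ≤
      (∫⁻ y in ball 0 1, ENNReal.ofReal (‖y‖ ^ (s * q)) ∂μ) ^ (1 / q) *
        (∫⁻ a, f a ^ p ∂μ) ^ (1 / p) + ∫⁻ a, f a ∂μ := by
  have hkernel : ∀ y : E, ENNReal.ofReal (‖y‖ ^ (s * q)) = ENNReal.ofReal (‖y‖ ^ s) ^ q :=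
    fun y => by
      rw [ENNReal.ofReal_rpow_of_nonneg (by positivity) hpq.symm.nonneg,
        ← Real.rpow_mul (norm_nonneg y)]
  rw [← lintegral_add_compl _ (measurableSet_ball (x := x) (ε := 1))]
  simp_rw [hkernel]
  exact add_le_add (setLIntegral_ball_mul_le_Lp_mul_Lq hpq (by fun_prop) hf x 1)
    (setLIntegral_compl_ball_rpow_norm_sub_mul_le hs f x)

theorem setLIntegral_ball_rpow_norm_lt_top (hE : 1 ≤ finrank ℝ E) {s : ℝ}
    (hs : -(finrank ℝ E : ℝ) < s) (r : ℝ) :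
    ∫⁻ y in ball 0 r, ENNReal.ofReal (‖y‖ ^ s) ∂μ < ∞ := by
  refine IntegrableOn.setLIntegral_lt_top <|
    integrableOn_ball_of_norm_le_rpow (μ := μ) (C := 1) (α := -s) hE (by linarith) (ae_of_all _ ?_)
      (continuous_norm.measurable.pow_const s).aestronglyMeasurable
  intro y
  rw [Real.norm_of_nonneg (by positivity), neg_neg, one_mul]

theorem lintegral_rpow_norm_sub_mul_density_le {s p q : ℝ} (hs : s ≤ 0)
    (hpq : p.HolderConjugate q) {ρ : E → ℝ} (hρ : ∀ x, 0 ≤ ρ x) (hρint : Integrable ρ μ)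
    (hρ1 : ∫ x, ρ x ∂μ = 1) (x : E) :
    ∫⁻ a, ENNReal.ofReal (‖x - a‖ ^ s * ρ a) ∂μ ≤
      (∫⁻ y in ball 0 1, ENNReal.ofReal (‖y‖ ^ (s * q)) ∂μ) ^ (1 / q) *
        eLpNorm ρ (ENNReal.ofReal p) μ + 1 := by
  have hLp : (∫⁻ a, ENNReal.ofReal (ρ a) ^ p ∂μ) ^ (1 / p) = eLpNorm ρ (ENNReal.ofReal p) μ := by
    rw [eLpNorm_eq_lintegral_rpow_enorm_toReal (by simpa using hpq.pos) ENNReal.ofReal_ne_top,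
      ENNReal.toReal_ofReal hpq.nonneg]
    simp_rw [Real.enorm_eq_ofReal (hρ _)]
  have hmass : ∫⁻ a, ENNReal.ofReal (ρ a) ∂μ = 1 := by
    rw [← ofReal_integral_eq_lintegral_ofReal hρint (ae_of_all _ hρ), hρ1, ENNReal.ofReal_one]
  simp_rw [ENNReal.ofReal_mul (Real.rpow_nonneg (norm_nonneg _) s)]
  rw [← hLp, ← hmass]
  exact lintegral_rpow_norm_sub_mul_le hs hpq hρint.aemeasurable.ennreal_ofReal x

end Potential

theorem Ynorm_nonneg {d : ℕ} {Θ : ℝ → ℝ} (hΘ : ∀ r, 1 ≤ r → 0 ≤ Θ r)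
    (h : EuclideanSpace ℝ (Fin d) → ℝ) : 0 ≤ Ynorm d Θ h :=
  Real.sSup_nonneg fun _ ⟨r, hr, hx⟩ => hx ▸ div_nonneg ENNReal.toReal_nonneg (hΘ r hr)

theorem eLpNorm_le_mul_Ynorm {d : ℕ} {Θ : ℝ → ℝ} {h : EuclideanSpace ℝ (Fin d) → ℝ}
    (hh : MemY d Θ h) {r : ℝ} (hr : 1 ≤ r) (hΘr : 0 < Θ r) :
    eLpNorm h (ENNReal.ofReal r) volume ≤ ENNReal.ofReal (Θ r * Ynorm d Θ h) := by
  rw [← ENNReal.ofReal_toReal (hh.1 r hr).eLpNorm_ne_top]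
  refine ENNReal.ofReal_le_ofReal ?_
  rw [← div_le_iff₀' hΘr]
  exact le_csSup hh.2 ⟨r, hr, rfl⟩

theorem norm_div_norm_pow_smul_le {F : Type*} [NormedAddCommGroup F] [NormedSpace ℝ F]
    {c : ℝ} (hc : 0 ≤ c) (v : F) (d : ℕ) :
    ‖(c / ‖v‖ ^ d) • v‖ ≤ ‖v‖ ^ (1 - (d : ℝ)) * c := by
  rcases eq_or_ne v 0 with rfl | hv
  · simp only [smul_zero, norm_zero]
    positivity
  have hv : 0 < ‖v‖ := norm_pos_iff.mpr hv
  rw [norm_smul, Real.norm_of_nonneg (by positivity), Real.rpow_sub hv, Real.rpow_one,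
    Real.rpow_natCast]
  apply le_of_eq
  field_simp

theorem enorm_force_le (d : ℕ) {ρ : EuclideanSpace ℝ (Fin d) → ℝ} (hρ : ∀ x, 0 ≤ ρ x)
    (x : EuclideanSpace ℝ (Fin d)) :
    ‖force d ρ x‖ₑ ≤ ∫⁻ q, ENNReal.ofReal (‖x - q‖ ^ (1 - (d : ℝ)) * ρ q) :=
  (enorm_integral_le_lintegral_enorm _).trans <| lintegral_mono fun q => by
    rw [← ofReal_norm]
    exact ENNReal.ofReal_le_ofReal (norm_div_norm_pow_smul_le (hρ q) (x - q) d)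

theorem exists_holderConjugate_neg_lt_one_sub_mul {n : ℝ} (hn : 0 < n) :
    ∃ p q : ℝ, p.HolderConjugate q ∧ -n < (1 - n) * q :=
  ⟨2 * n + 1, (2 * n + 1) / (2 * n), by
    simpa [Real.conjExponent] using
      Real.HolderConjugate.conjExponent (p := 2 * n + 1) (by linarith), by
    rw [mul_div_assoc', lt_div_iff₀ (by positivity)]
    nlinarith⟩

theorem stmt6_general (d : ℕ) (hd : 2 ≤ d) (Θ : ℝ → ℝ)
    (hΘpos : ∀ r : ℝ, 0 ≤ r → 0 < Θ r) :
    ∃ C : ℝ, 0 < C ∧ ∀ ρ : EuclideanSpace ℝ (Fin d) → ℝ,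
      (∀ x, 0 ≤ ρ x) → (∫ x, ρ x) = 1 → MemY d Θ ρ →
      (∀ x : EuclideanSpace ℝ (Fin d),
        (∫⁻ q, ENNReal.ofReal (‖x - q‖ ^ (1 - (d:ℝ)) * ρ q)) ≤
          ENNReal.ofReal (C * (1 + Ynorm d Θ ρ))) ∧
      eLpNorm (force d ρ) ⊤ volume ≤ ENNReal.ofReal (C * (1 + Ynorm d Θ ρ)) := by
  have hd' : (1 : ℝ) ≤ d := by exact_mod_cast one_le_two.trans hd
  have hs : 1 - (d : ℝ) ≤ 0 := by linarith
  obtain ⟨p, q, hpq, hsq⟩ := exists_holderConjugate_neg_lt_one_sub_mul (n := d) (by linarith)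
  set K := (∫⁻ y in ball (0 : EuclideanSpace ℝ (Fin d)) 1,
    ENNReal.ofReal (‖y‖ ^ ((1 - d) * q))) ^ (1 / q)
  have hK : K ≠ ∞ := ENNReal.rpow_ne_top_of_nonneg (one_div_nonneg.mpr hpq.symm.nonneg) <|
    (setLIntegral_ball_rpow_norm_lt_top (by rw [finrank_euclideanSpace_fin]; omega)
      (by simpa using hsq) 1).ne
  have hΘp : 0 < Θ p := hΘpos p hpq.nonneg
  refine ⟨1 + K.toReal * Θ p, by positivity, fun ρ hρ hρ1 hY => ?_⟩
  have hYnorm := Ynorm_nonneg (fun r hr => (hΘpos r (by linarith)).le) ρ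
  have hρint : Integrable ρ := memLp_one_iff_integrable.mp (by simpa using hY.1 1 le_rfl)
  have hpotential : ∀ x, ∫⁻ q, ENNReal.ofReal (‖x - q‖ ^ (1 - (d : ℝ)) * ρ q) ≤
      ENNReal.ofReal ((1 + K.toReal * Θ p) * (1 + Ynorm d Θ ρ)) := fun x => calc
    _ ≤ K * eLpNorm ρ (ENNReal.ofReal p) volume + 1 :=
        lintegral_rpow_norm_sub_mul_density_le hs hpq hρ hρint hρ1 x
    _ ≤ ENNReal.ofReal (K.toReal * (Θ p * Ynorm d Θ ρ) + 1) := by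
        rw [ENNReal.ofReal_add (by positivity) zero_le_one, ENNReal.ofReal_one,
          ENNReal.ofReal_mul ENNReal.toReal_nonneg, ENNReal.ofReal_toReal hK]
        gcongr
        exact eLpNorm_le_mul_Ynorm hY hpq.lt.le hΘp
    _ ≤ _ := ENNReal.ofReal_le_ofReal (by nlinarith [ENNReal.toReal_nonneg (a := K)])
  refine ⟨hpotential, ?_⟩
  rw [eLpNorm_exponent_top]
  exact eLpNormEssSup_le_of_ae_enorm_bound <|
    ae_of_all _ fun x => (enorm_force_le d hρ x).trans (hpotential x)

/-- Uniform bound on the Newtonian force field of a Yudovich probability density: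
`∫ |x − q|^{1−d} ρ(q) dq ≤ C(1 + ‖ρ‖_{Y^Θ})`, hence `‖E_ρ‖_∞ ≤ C(1 + ‖ρ‖_{Y^Θ})`. -/
theorem stmt6 (d : ℕ) (hd : 2 ≤ d) (Θ : ℝ → ℝ)
    (hΘpos : ∀ r : ℝ, 0 ≤ r → 0 < Θ r) (hΘmono : MonotoneOn Θ (Ici 0)) (hΘ1 : Θ 1 = 1) :
    ∃ C : ℝ, 0 < C ∧ ∀ ρ : EuclideanSpace ℝ (Fin d) → ℝ,
      (∀ x, 0 ≤ ρ x) → (∫ x, ρ x) = 1 → MemY d Θ ρ →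
      (∀ x : EuclideanSpace ℝ (Fin d),
        (∫⁻ q, ENNReal.ofReal (‖x - q‖ ^ (1 - (d:ℝ)) * ρ q)) ≤
          ENNReal.ofReal (C * (1 + Ynorm d Θ ρ))) ∧
      eLpNorm (force d ρ) ⊤ volume ≤ ENNReal.ofReal (C * (1 + Ynorm d Θ ρ)) :=
  stmt6_general d hd Θ hΘpos
end
end

section
/- Let φ : [0, ∞) → [0, ∞) be continuous, nondecreasing, and strictly positive on (0, ∞), let 0 < c < 1, and set Φ(s) := √(s φ(s)) and Ψ(u) := ∫_u^c ds/Φ(s) for u ∈ (0, c]. Let T > 0, let H ∈ L¹([0, T]) be nonnegative, and let G : [0, T] → (0, c) be continuous with G(t) ≤ G(0) + ∫_0^t H(s) Φ(G(s)) ds for all t ∈ [0, T]. If ∫_0^T H(s) ds ≤ Ψ(G(0)), then for every t ∈ [0, T], Ψ(G(t)) ≥ Ψ(G(0)) − ∫_0^t H(s) ds. -/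
open MeasureTheory Set

/-- General Osgood-type comparison lemma with an abstract `Φ`. -/
theorem osgood_aux (Φ : ℝ → ℝ) (hΦcont : ContinuousOn Φ (Ici 0))
    (hΦnn : ∀ s, 0 ≤ Φ s)
    (hΦpos : ∀ s : ℝ, 0 < s → 0 < Φ s)
    (hΦmono : ∀ a b : ℝ, 0 < a → a ≤ b → Φ a ≤ Φ b)
    (c : ℝ) (hc0 : 0 < c)
    (T : ℝ) (hT : 0 ≤ T)
    (H : ℝ → ℝ) (hHint : IntegrableOn H (Icc 0 T)) (hHnn : ∀ t, 0 ≤ H t)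
    (G : ℝ → ℝ)
    (hGpos : ∀ t ∈ Icc 0 T, 0 < G t)
    (hineq : ∀ t ∈ Icc 0 T, G t ≤ G 0 + ∫ s in (0:ℝ)..t, H s * Φ (G s))
    (hGcont : ContinuousOn G (Icc 0 T)) :
    ∀ t ∈ Icc 0 T,
      (∫ s in (G 0)..c, 1 / Φ s) - (∫ s in (0:ℝ)..t, H s) ≤ ∫ s in (G t)..c, 1 / Φ s := by
  have h0T : (0:ℝ) ∈ Icc 0 T := ⟨le_refl 0, hT⟩
  have hG00 : 0 < G 0 := hGpos 0 h0T
  have hinvnn : ∀ s : ℝ, 0 ≤ 1 / Φ s := fun s => one_div_nonneg.2 (hΦnn s)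
  -- integrability of 1/Φ on positive intervals
  have hinvcont : ContinuousOn (fun s => 1 / Φ s) (Ioi 0) := by
    apply ContinuousOn.div continuousOn_const (hΦcont.mono Ioi_subset_Ici_self)
    exact fun x hx => (hΦpos x hx).ne'
  have hinvint : ∀ a b : ℝ, 0 < a → 0 < b →
      IntervalIntegrable (fun s => 1 / Φ s) volume a b := by
    intro a b ha hb
    apply ContinuousOn.intervalIntegrable
    apply hinvcont.mono
    intro x hx
    exact lt_of_lt_of_le (lt_min ha hb) hx.1
  -- interval integrability of H
  have hH' : ∀ a b : ℝ, a ∈ Icc 0 T → b ∈ Icc 0 T → IntervalIntegrable H volume a b := by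
    intro a b ha hb
    apply (hHint.mono_set ?_).intervalIntegrable
    intro x hx
    exact ⟨le_trans (le_min ha.1 hb.1) hx.1, le_trans hx.2 (max_le ha.2 hb.2)⟩
  -- interval integrability of H * Φ(G)
  have hΦGcont : ContinuousOn (fun s => Φ (G s)) (Icc 0 T) :=
    hΦcont.comp hGcont (fun x hx => (hGpos x hx).le)
  have hhint : IntegrableOn (fun s => H s * Φ (G s)) (Icc 0 T) :=
    hHint.mul_continuousOn hΦGcont isCompact_Icc
  have hh' : ∀ a b : ℝ, a ∈ Icc 0 T → b ∈ Icc 0 T →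
      IntervalIntegrable (fun s => H s * Φ (G s)) volume a b := by
    intro a b ha hb
    apply (hhint.mono_set ?_).intervalIntegrable
    intro x hx
    exact ⟨le_trans (le_min ha.1 hb.1) hx.1, le_trans hx.2 (max_le ha.2 hb.2)⟩
  -- the majorant F
  set F : ℝ → ℝ := fun t => G 0 + ∫ s in (0:ℝ)..t, H s * Φ (G s) with hF
  have hF0 : F 0 = G 0 := by simp [hF]
  have hFd : ∀ a b : ℝ, a ∈ Icc 0 T → b ∈ Icc 0 T →
      F b - F a = ∫ s in a..b, H s * Φ (G s) := by
    intro a b ha hb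
    have h := intervalIntegral.integral_add_adjacent_intervals (μ := volume)
      (hh' 0 a h0T ha) (hh' a b ha hb)
    simp only [hF]
    linarith
  have hFmono : ∀ a b : ℝ, a ∈ Icc 0 T → b ∈ Icc 0 T → a ≤ b → F a ≤ F b := by
    intro a b ha hb hab
    have h1 := hFd a b ha hb
    have h2 : 0 ≤ ∫ s in a..b, H s * Φ (G s) :=
      intervalIntegral.integral_nonneg hab (fun x _ => mul_nonneg (hHnn x) (hΦnn _))
    linarith
  have hGF : ∀ t ∈ Icc 0 T, G t ≤ F t := by
    intro t ht
    simp only [hF]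
    exact hineq t ht
  have hFlb : ∀ t ∈ Icc 0 T, G 0 ≤ F t := by
    intro t ht
    have := hFmono 0 t h0T ht ht.1
    rwa [hF0] at this
  have hFpos : ∀ t ∈ Icc 0 T, 0 < F t := fun t ht => lt_of_lt_of_le hG00 (hFlb t ht)
  have hFcont : ContinuousOn F (Icc 0 T) := by
    simp only [hF]
    apply continuousOn_const.add
    have h := intervalIntegral.continuousOn_primitive_interval (μ := volume) (a := (0:ℝ))
      (b := T) (f := fun s => H s * Φ (G s)) (by rwa [uIcc_of_le hT])
    rwa [uIcc_of_le hT] at h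
  -- key estimate
  have key : ∀ t ∈ Icc 0 T, (∫ s in (G 0)..(F t), 1 / Φ s) ≤ ∫ s in (0:ℝ)..t, H s := by
    intro t ht
    have hHt0 : 0 ≤ ∫ s in (0:ℝ)..t, H s :=
      intervalIntegral.integral_nonneg ht.1 (fun x _ => hHnn x)
    have main : ∀ ε : ℝ, 0 < ε →
        (∫ s in (G 0)..(F t), 1 / Φ s) ≤ (1 + ε) * ∫ s in (0:ℝ)..t, H s := by
      intro ε hε
      have hΦFcont : ContinuousOn (fun x => Φ (F x)) (Icc 0 T) :=
        hΦcont.comp hFcont (fun x hx => (hFpos x hx).le)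
      have huc := isCompact_Icc.uniformContinuousOn_of_continuous hΦFcont
      obtain ⟨δ, hδ, hδ'⟩ := Metric.uniformContinuousOn_iff.1 huc (ε * Φ (G 0))
        (mul_pos hε (hΦpos _ hG00))
      obtain ⟨n, hn⟩ := exists_nat_gt (t / δ)
      have hn0 : 0 < (n:ℝ) := lt_of_le_of_lt (div_nonneg ht.1 hδ.le) hn
      have htn : t / n < δ := by
        rw [div_lt_iff₀ hn0]
        have h1 : t < n * δ := by
          have := (div_lt_iff₀ hδ).1 hn
          linarith
        linarith
      set τ : ℕ → ℝ := fun k => k * t / n with hτ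
      have htn0 : 0 ≤ t / n := div_nonneg ht.1 hn0.le
      have hτmem : ∀ k : ℕ, k ≤ n → τ k ∈ Icc 0 T := by
        intro k hk
        constructor
        · exact div_nonneg (mul_nonneg (Nat.cast_nonneg k) ht.1) hn0.le
        · have h1 : (k:ℝ) * t ≤ n * t :=
            mul_le_mul_of_nonneg_right (Nat.cast_le.2 hk) ht.1
          have h2 : τ k ≤ t := by
            rw [hτ]
            rw [div_le_iff₀ hn0]
            linarith
          exact le_trans h2 ht.2
      have hτsucc : ∀ k : ℕ, τ (k+1) - τ k = t / n := by
        intro k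
        simp only [hτ]
        push_cast
        ring
      have hτmono : ∀ k : ℕ, τ k ≤ τ (k+1) := by
        intro k
        have := hτsucc k
        linarith
      have claim : ∀ k : ℕ, k ≤ n →
          (∫ s in (G 0)..(F (τ k)), 1 / Φ s) ≤ (1 + ε) * ∫ s in (0:ℝ)..(τ k), H s := by
        intro k
        induction k with
        | zero =>
          intro _
          have hτ0 : τ 0 = 0 := by simp [hτ]
          rw [hτ0, hF0]
          simp
        | succ k ih =>
          intro hk1
          have hk : k ≤ n := Nat.le_of_succ_le hk1
          have IH := ih hk
          have hamem := hτmem k hk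
          have hbmem := hτmem (k+1) hk1
          have hab : τ k ≤ τ (k+1) := hτmono k
          have hFapos : 0 < F (τ k) := hFpos _ hamem
          have hFbpos : 0 < F (τ (k+1)) := hFpos _ hbmem
          have hFab : F (τ k) ≤ F (τ (k+1)) := hFmono _ _ hamem hbmem hab
          have hGa : G 0 ≤ F (τ k) := hFlb _ hamem
          have hIab : 0 ≤ ∫ s in (τ k)..(τ (k+1)), H s :=
            intervalIntegral.integral_nonneg hab (fun x _ => hHnn x)
          have hsub : Icc (τ k) (τ (k+1)) ⊆ Icc 0 T := Icc_subset_Icc hamem.1 hbmem.2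
          have step1 : F (τ (k+1)) - F (τ k) ≤
              Φ (F (τ (k+1))) * ∫ s in (τ k)..(τ (k+1)), H s := by
            rw [hFd _ _ hamem hbmem, ← intervalIntegral.integral_const_mul]
            apply intervalIntegral.integral_mono_on hab (hh' _ _ hamem hbmem)
              ((hH' _ _ hamem hbmem).const_mul _)
            intro x hx
            have hx' := hsub hx
            have h1 : G x ≤ F (τ (k+1)) :=
              le_trans (hGF x hx') (hFmono x _ hx' hbmem hx.2)
            have h2 : Φ (G x) ≤ Φ (F (τ (k+1))) := hΦmono _ _ (hGpos x hx') h1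
            calc H x * Φ (G x) ≤ H x * Φ (F (τ (k+1))) :=
                  mul_le_mul_of_nonneg_left h2 (hHnn x)
              _ = Φ (F (τ (k+1))) * H x := mul_comm _ _
          have step2 : (∫ s in (F (τ k))..(F (τ (k+1))), 1 / Φ s) ≤
              (F (τ (k+1)) - F (τ k)) * (1 / Φ (F (τ k))) := by
            have h := intervalIntegral.integral_mono_on (μ := volume) hFab
              (hinvint _ _ hFapos hFbpos)
              (intervalIntegrable_const (c := 1 / Φ (F (τ k))))
              (fun x hx => one_div_le_one_div_of_le (hΦpos _ hFapos)
                (hΦmono _ _ hFapos hx.1))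
            rwa [intervalIntegral.integral_const, smul_eq_mul] at h
          have step3 : Φ (F (τ (k+1))) ≤ (1 + ε) * Φ (F (τ k)) := by
            have hba : τ (k+1) - τ k = t / n := hτsucc k
            have hd : dist (τ (k+1)) (τ k) < δ := by
              rw [Real.dist_eq, hba, abs_of_nonneg htn0]
              exact htn
            have h := hδ' _ hbmem _ hamem hd
            rw [Real.dist_eq] at h
            have h1 : Φ (F (τ (k+1))) - Φ (F (τ k)) < ε * Φ (G 0) :=
              lt_of_le_of_lt (le_abs_self _) h
            have h2 : Φ (G 0) ≤ Φ (F (τ k)) := hΦmono _ _ hG00 hGa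
            have h3 : ε * Φ (G 0) ≤ ε * Φ (F (τ k)) :=
              mul_le_mul_of_nonneg_left h2 hε.le
            linarith
          have piece : (∫ s in (F (τ k))..(F (τ (k+1))), 1 / Φ s) ≤
              (1 + ε) * ∫ s in (τ k)..(τ (k+1)), H s := by
            have hA : 0 < Φ (F (τ k)) := hΦpos _ hFapos
            have c1 : (F (τ (k+1)) - F (τ k)) * (1 / Φ (F (τ k))) ≤
                (Φ (F (τ (k+1))) * ∫ s in (τ k)..(τ (k+1)), H s) * (1 / Φ (F (τ k))) :=
              mul_le_mul_of_nonneg_right step1 (by positivity)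
            have c2 : (Φ (F (τ (k+1))) * ∫ s in (τ k)..(τ (k+1)), H s) * (1 / Φ (F (τ k))) ≤
                (((1 + ε) * Φ (F (τ k))) * ∫ s in (τ k)..(τ (k+1)), H s) * (1 / Φ (F (τ k))) := by
              apply mul_le_mul_of_nonneg_right _ (by positivity)
              exact mul_le_mul_of_nonneg_right step3 hIab
            have c3 : (((1 + ε) * Φ (F (τ k))) * ∫ s in (τ k)..(τ (k+1)), H s) *
                (1 / Φ (F (τ k))) = (1 + ε) * ∫ s in (τ k)..(τ (k+1)), H s := by
              field_simp
            linarith [step2]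
          have add1 : (∫ s in (G 0)..(F (τ k)), 1 / Φ s) +
              (∫ s in (F (τ k))..(F (τ (k+1))), 1 / Φ s) =
              ∫ s in (G 0)..(F (τ (k+1))), 1 / Φ s :=
            intervalIntegral.integral_add_adjacent_intervals
              (hinvint _ _ hG00 hFapos) (hinvint _ _ hFapos hFbpos)
          have add2 : (∫ s in (0:ℝ)..(τ k), H s) + (∫ s in (τ k)..(τ (k+1)), H s) =
              ∫ s in (0:ℝ)..(τ (k+1)), H s :=
            intervalIntegral.integral_add_adjacent_intervals
              (hH' 0 _ h0T hamem) (hH' _ _ hamem hbmem)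
          have expand : (1 + ε) * ((∫ s in (0:ℝ)..(τ k), H s) +
              (∫ s in (τ k)..(τ (k+1)), H s)) =
              (1 + ε) * (∫ s in (0:ℝ)..(τ k), H s) +
              (1 + ε) * (∫ s in (τ k)..(τ (k+1)), H s) := by ring
          rw [← add1, ← add2]
          linarith
      have hτn : τ n = t := by
        simp only [hτ]
        field_simp
      have := claim n (le_refl n)
      rwa [hτn] at this
    refine le_of_forall_pos_le_add ?_
    intro η hη
    set B := ∫ s in (0:ℝ)..t, H s with hB
    have hB1 : 0 < B + 1 := by linarith
    have h := main (η / (B + 1)) (by positivity)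
    have hexp : (1 + η / (B + 1)) * B = B + η / (B + 1) * B := by ring
    have h2 : η / (B + 1) * B ≤ η := by
      rw [div_mul_eq_mul_div, div_le_iff₀ hB1]
      nlinarith [hη.le, hHt0]
    linarith
  -- conclusion
  intro t ht
  have hk := key t ht
  have hFt := hFpos t ht
  have hGt := hGpos t ht
  have d1 : (∫ s in (G 0)..(F t), 1 / Φ s) + (∫ s in (F t)..c, 1 / Φ s) =
      ∫ s in (G 0)..c, 1 / Φ s :=
    intervalIntegral.integral_add_adjacent_intervals
      (hinvint _ _ hG00 hFt) (hinvint _ _ hFt hc0)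
  have d2 : (∫ s in (F t)..(G t), 1 / Φ s) + (∫ s in (G t)..c, 1 / Φ s) =
      ∫ s in (F t)..c, 1 / Φ s :=
    intervalIntegral.integral_add_adjacent_intervals
      (hinvint _ _ hFt hGt) (hinvint _ _ hGt hc0)
  have d3 : 0 ≤ ∫ s in (G t)..(F t), 1 / Φ s :=
    intervalIntegral.integral_nonneg (hGF t ht) (fun x _ => hinvnn x)
  have d4 : (∫ s in (F t)..(G t), 1 / Φ s) = -∫ s in (G t)..(F t), 1 / Φ s :=
    intervalIntegral.integral_symm _ _
  linarith

/-- Osgood-type lemma: if `G(t) ≤ G(0) + ∫_0^t H Φ(G)` with `Φ(s) = √(s φ(s))`,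
and `∫_0^T H ≤ Ψ(G(0))` where `Ψ(u) = ∫_u^c ds/Φ(s)`, then
`Ψ(G(t)) ≥ Ψ(G(0)) − ∫_0^t H` on `[0, T]`. -/
theorem stmt9 (φ : ℝ → ℝ) (hφcont : ContinuousOn φ (Ici 0))
    (hφmono : MonotoneOn φ (Ici 0)) (hφpos : ∀ s : ℝ, 0 < s → 0 < φ s)
    (c : ℝ) (hc0 : 0 < c) (hc1 : c < 1)
    (T : ℝ) (hT : 0 < T)
    (H : ℝ → ℝ) (hHint : IntegrableOn H (Icc 0 T)) (hHnn : ∀ t, 0 ≤ H t)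
    (G : ℝ → ℝ) (hGcont : ContinuousOn G (Icc 0 T))
    (hGmem : ∀ t ∈ Icc 0 T, G t ∈ Ioo 0 c)
    (hineq : ∀ t ∈ Icc 0 T,
      G t ≤ G 0 + ∫ s in (0:ℝ)..t, H s * Real.sqrt (G s * φ (G s)))
    (hsmall : (∫ s in (0:ℝ)..T, H s) ≤ ∫ s in (G 0)..c, 1 / Real.sqrt (s * φ s)) :
    ∀ t ∈ Icc 0 T,
      (∫ s in (G 0)..c, 1 / Real.sqrt (s * φ s)) - (∫ s in (0:ℝ)..t, H s) ≤
        ∫ s in (G t)..c, 1 / Real.sqrt (s * φ s) := by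
  have hΦcont : ContinuousOn (fun s : ℝ => Real.sqrt (s * φ s)) (Ici 0) :=
    Real.continuous_sqrt.comp_continuousOn (continuousOn_id.mul hφcont)
  have hΦnn : ∀ s : ℝ, 0 ≤ Real.sqrt (s * φ s) := fun s => Real.sqrt_nonneg _
  have hΦpos : ∀ s : ℝ, 0 < s → 0 < Real.sqrt (s * φ s) := fun s hs =>
    Real.sqrt_pos.2 (mul_pos hs (hφpos s hs))
  have hΦmono : ∀ a b : ℝ, 0 < a → a ≤ b → Real.sqrt (a * φ a) ≤ Real.sqrt (b * φ b) := by
    intro a b ha hab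
    apply Real.sqrt_le_sqrt
    exact mul_le_mul hab (hφmono (mem_Ici.2 ha.le) (mem_Ici.2 (ha.le.trans hab)) hab)
      (hφpos a ha).le (ha.le.trans hab)
  exact osgood_aux (fun s => Real.sqrt (s * φ s)) hΦcont hΦnn hΦpos hΦmono c hc0 T hT.le
    H hHint hHnn G (fun t ht => (hGmem t ht).1) hineq hGcont
end
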